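/- Fix any μ ∈ ℝ^d and any d×d symmetric positive definite matrix Σ. Then for any μ₁, μ₂ ∈ ℝ^d, any d×d symmetric positive definite Σ₁, Σ₂, and any γ, ρ, τ > 0: (μ₁, Σ₁) ≈_{γ,ρ,τ} (μ₂, Σ₂) if and only if (Σ^{1/2}μ₁ + μ, Σ^{1/2}Σ₁Σ^{1/2}) ≈_{γ,ρ,τ} (Σ^{1/2}μ₂ + μ, Σ^{1/2}Σ₂Σ^{1/2}). -/

import Mathlib

open MeasureTheory ProbabilityTheory Matrix Real
open scoped ENNReal

noncomputable section

/-- The `ℓ²`-operator norm of a real `d × d` matrix. -/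
def opNorm {d : ℕ} (M : Matrix (Fin d) (Fin d) ℝ) : ℝ :=
  ‖(Matrix.toEuclideanCLM (𝕜 := ℝ) M)‖

/-- The Frobenius norm of a real `d × d` matrix. -/
def frobNorm {d : ℕ} (M : Matrix (Fin d) (Fin d) ℝ) : ℝ :=
  Real.sqrt (∑ i, ∑ j, (M i j) ^ 2)

/-- The Euclidean norm of a vector in `ℝ^d`. -/
def vnorm {d : ℕ} (v : Fin d → ℝ) : ℝ := Real.sqrt (∑ i, (v i) ^ 2)

/-- The positive semidefinite square root of a matrix (junk value `0` if the matrix is not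
positive semidefinite). -/
def msqrt {d : ℕ} (S : Matrix (Fin d) (Fin d) ℝ) : Matrix (Fin d) (Fin d) ℝ :=
  letI := Classical.propDecidable S.PosSemidef
  if h : S.PosSemidef then
    (h.1.eigenvectorUnitary : Matrix (Fin d) (Fin d) ℝ) *
      diagonal ((↑) ∘ (Real.sqrt ·) ∘ h.1.eigenvalues) *
      (star h.1.eigenvectorUnitary : Matrix (Fin d) (Fin d) ℝ)
  else 0

/-- `Σ^{-1/2}`, the inverse of the positive square root. -/
def sqrtInv {d : ℕ} (S : Matrix (Fin d) (Fin d) ℝ) : Matrix (Fin d) (Fin d) ℝ :=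
  (msqrt S)⁻¹

/-- `(μ̂, Σ̂) ≈_{γ,ρ,τ} (μ, Σ)`: spectral, Frobenius, and Mahalanobis closeness. -/
def approx {d : ℕ} (γ ρ τ : ℝ) (p q : (Fin d → ℝ) × Matrix (Fin d) (Fin d) ℝ) : Prop :=
  opNorm (sqrtInv q.2 * p.2 * sqrtInv q.2 - 1) ≤ γ ∧
  frobNorm (sqrtInv q.2 * p.2 * sqrtInv q.2 - 1) ≤ ρ ∧
  vnorm (sqrtInv q.2 *ᵥ (p.1 - q.1)) ≤ τ

/-!
Write `R = Σ^{1/2}`, `B = Σ₂^{1/2}` and `T = (R Σ₂ R)^{1/2}`. Since `T² = R B² R`, the matrix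
`O = T⁻¹ R B` is orthogonal, and whitening by `T⁻¹` after the rescaling is whitening by `B⁻¹`
followed by `O`:
`T⁻¹ (R Σ₁ R) T⁻¹ = O (B⁻¹ Σ₁ B⁻¹) Oᵀ` and `T⁻¹ R (μ₁ - μ₂) = O B⁻¹ (μ₁ - μ₂)`.
The three norms in `≈` are invariant under `M ↦ O M Oᵀ` resp. `v ↦ O v`.
-/

section UnitaryConj

variable {n α : Type*} [Fintype n] [DecidableEq n] [CommRing α] [StarRing α]

lemma star_inv_mul_mul_of_isHermitian {R B T : Matrix n n α} (hR : R.IsHermitian)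
    (hB : B.IsHermitian) (hT : T.IsHermitian) : star (T⁻¹ * R * B) = B * R * T⁻¹ := by
  rw [star_eq_conjTranspose]
  simp only [conjTranspose_mul, conjTranspose_nonsing_inv, hR.eq, hB.eq, hT.eq, Matrix.mul_assoc]

lemma inv_mul_mul_mem_unitaryGroup {R B T : Matrix n n α} (hR : R.IsHermitian)
    (hB : B.IsHermitian) (hT : T.IsHermitian) (hTu : IsUnit T) (hTT : T * T = R * (B * B) * R) :
    T⁻¹ * R * B ∈ unitaryGroup n α := by
  have hTu' : IsUnit T.det := (isUnit_iff_isUnit_det T).mp hTu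
  rw [mem_unitaryGroup_iff, star_inv_mul_mul_of_isHermitian hR hB hT]
  calc T⁻¹ * R * B * (B * R * T⁻¹) = T⁻¹ * (R * (B * B) * R) * T⁻¹ := by noncomm_ring
    _ = (T⁻¹ * T) * (T * T⁻¹) := by rw [← hTT]; noncomm_ring
    _ = 1 := by rw [nonsing_inv_mul T hTu', mul_nonsing_inv T hTu', Matrix.one_mul]

end UnitaryConj

section MatrixSqrt

variable {d : ℕ} {S : Matrix (Fin d) (Fin d) ℝ}

lemma msqrt_of_posSemidef (hS : S.PosSemidef) : msqrt S =
    (hS.1.eigenvectorUnitary : Matrix (Fin d) (Fin d) ℝ) *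
      diagonal ((↑) ∘ (Real.sqrt ·) ∘ hS.1.eigenvalues) *
      (star hS.1.eigenvectorUnitary : Matrix (Fin d) (Fin d) ℝ) :=
  dif_pos hS

lemma msqrt_mul_msqrt (hS : S.PosSemidef) : msqrt S * msqrt S = S := by
  set U : Matrix (Fin d) (Fin d) ℝ := ↑hS.1.eigenvectorUnitary
  set D := diagonal (((↑) : ℝ → ℝ) ∘ (Real.sqrt ·) ∘ hS.1.eigenvalues)
  have hU : star U * U = 1 := Unitary.coe_star_mul_self _
  have hD : D * D = diagonal (RCLike.ofReal ∘ hS.1.eigenvalues) := by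
    rw [diagonal_mul_diagonal]
    congr 1
    funext i
    simp [Real.mul_self_sqrt (hS.eigenvalues_nonneg i)]
  conv_rhs => rw [hS.1.spectral_theorem, Unitary.conjStarAlgAut_apply]
  calc msqrt S * msqrt S = U * (D * (star U * U) * D) * star U := by
        rw [msqrt_of_posSemidef hS]; simp only [Matrix.mul_assoc]; rfl
    _ = _ := by rw [hU, Matrix.mul_one, hD]

lemma isHermitian_msqrt (hS : S.PosSemidef) : (msqrt S).IsHermitian := by
  rw [IsHermitian, msqrt_of_posSemidef hS]
  simp [Matrix.mul_assoc, star_eq_conjTranspose, conjTranspose_eq_transpose_of_trivial]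

lemma isUnit_msqrt (hS : S.PosDef) : IsUnit (msqrt S) := by
  rw [isUnit_iff_isUnit_det, isUnit_iff_ne_zero]
  intro h
  have hdet := hS.det_pos
  rw [← msqrt_mul_msqrt hS.posSemidef, det_mul, h, mul_zero] at hdet
  exact lt_irrefl _ hdet

lemma posDef_msqrt_mul_mul_msqrt {A : Matrix (Fin d) (Fin d) ℝ} (hS : S.PosDef)
    (hA : A.PosDef) : (msqrt S * A * msqrt S).PosDef := by
  have h := hA.conjTranspose_mul_mul_same (mulVec_injective_iff_isUnit.mpr (isUnit_msqrt hS))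
  rwa [(isHermitian_msqrt hS.posSemidef).eq] at h

end MatrixSqrt

section OrthogonalInvariance

variable {d : ℕ} {U : Matrix (Fin d) (Fin d) ℝ}

lemma opNorm_unitary_conj (hU : U ∈ unitaryGroup (Fin d) ℝ) (M : Matrix (Fin d) (Fin d) ℝ) :
    opNorm (U * M * star U) = opNorm M := by
  have hU' := Unitary.map_mem (toEuclideanCLM (n := Fin d) (𝕜 := ℝ)) hU
  have hUstar := Unitary.map_mem (toEuclideanCLM (n := Fin d) (𝕜 := ℝ)) (Unitary.star_mem hU)
  rw [opNorm, opNorm, _root_.map_mul, _root_.map_mul,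
    CStarRing.norm_mul_mem_unitary _ hUstar, CStarRing.norm_mem_unitary_mul _ hU']

lemma frobNorm_eq_sqrt_trace (M : Matrix (Fin d) (Fin d) ℝ) :
    frobNorm M = Real.sqrt (trace (Mᵀ * M)) := by
  rw [frobNorm, trace, Finset.sum_comm]
  simp [mul_apply, sq]

lemma frobNorm_unitary_conj (hU : U ∈ unitaryGroup (Fin d) ℝ) (M : Matrix (Fin d) (Fin d) ℝ) :
    frobNorm (U * M * star U) = frobNorm M := by
  have hUU : Uᵀ * U = 1 := mem_unitaryGroup_iff'.mp hU
  rw [frobNorm_eq_sqrt_trace, frobNorm_eq_sqrt_trace, star_eq_conjTranspose,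
    conjTranspose_eq_transpose_of_trivial]
  congr 1
  calc trace ((U * M * Uᵀ)ᵀ * (U * M * Uᵀ)) = trace (U * (Mᵀ * (Uᵀ * U) * M) * Uᵀ) := by
        simp only [transpose_mul, transpose_transpose, Matrix.mul_assoc]
    _ = trace (Uᵀ * U * (Mᵀ * (Uᵀ * U) * M)) := trace_mul_cycle _ _ _
    _ = trace (Mᵀ * M) := by rw [hUU, Matrix.one_mul, Matrix.mul_one]

lemma vnorm_unitary_mulVec (hU : U ∈ unitaryGroup (Fin d) ℝ) (v : Fin d → ℝ) :
    vnorm (U *ᵥ v) = vnorm v := by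
  have hUU : Uᵀ * U = 1 := mem_unitaryGroup_iff'.mp hU
  have hdot : ∀ w : Fin d → ℝ, ∑ i, w i ^ 2 = w ⬝ᵥ w := fun w => by simp [dotProduct, sq]
  rw [vnorm, vnorm, hdot, hdot, dotProduct_mulVec, ← mulVec_transpose, mulVec_mulVec, hUU,
    one_mulVec]

end OrthogonalInvariance

lemma approx_iff_of_unitary {d : ℕ} {γ ρ τ : ℝ}
    {p q p' q' : (Fin d → ℝ) × Matrix (Fin d) (Fin d) ℝ} {U : Matrix (Fin d) (Fin d) ℝ}
    (hU : U ∈ unitaryGroup (Fin d) ℝ)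
    (hcov : sqrtInv q'.2 * p'.2 * sqrtInv q'.2 = U * (sqrtInv q.2 * p.2 * sqrtInv q.2) * star U)
    (hmean : sqrtInv q'.2 *ᵥ (p'.1 - q'.1) = U *ᵥ (sqrtInv q.2 *ᵥ (p.1 - q.1))) :
    approx γ ρ τ p' q' ↔ approx γ ρ τ p q := by
  have hcov' : sqrtInv q'.2 * p'.2 * sqrtInv q'.2 - 1 =
      U * (sqrtInv q.2 * p.2 * sqrtInv q.2 - 1) * star U := by
    rw [hcov, Matrix.mul_sub, Matrix.sub_mul, Matrix.mul_one, mem_unitaryGroup_iff.mp hU]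
  rw [approx, approx, hcov', hmean, opNorm_unitary_conj hU, frobNorm_unitary_conj hU,
    vnorm_unitary_mulVec hU]

theorem approx_invariant_under_scaling_general {d : ℕ} (μ : Fin d → ℝ)
    (S : Matrix (Fin d) (Fin d) ℝ) (hS : S.PosDef)
    (μ₁ μ₂ : Fin d → ℝ) (S₁ S₂ : Matrix (Fin d) (Fin d) ℝ)
    (h₂ : S₂.PosDef)
    (γ ρ τ : ℝ) :
    approx γ ρ τ (μ₁, S₁) (μ₂, S₂) ↔
      approx γ ρ τ (msqrt S *ᵥ μ₁ + μ, msqrt S * S₁ * msqrt S)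
        (msqrt S *ᵥ μ₂ + μ, msqrt S * S₂ * msqrt S) := by
  set R := msqrt S
  set B := msqrt S₂
  have hRS₂R := posDef_msqrt_mul_mul_msqrt hS h₂
  set T := msqrt (R * S₂ * R)
  have hR := isHermitian_msqrt hS.posSemidef
  have hB := isHermitian_msqrt h₂.posSemidef
  have hT := isHermitian_msqrt hRS₂R.posSemidef
  have hBu : IsUnit B.det := (isUnit_iff_isUnit_det B).mp (isUnit_msqrt h₂)
  have hBB : B * B⁻¹ = 1 := mul_nonsing_inv B hBu
  have hBB' : B⁻¹ * B = 1 := nonsing_inv_mul B hBu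
  have hO : T⁻¹ * R * B ∈ unitaryGroup (Fin d) ℝ := inv_mul_mul_mem_unitaryGroup hR hB hT
    (isUnit_msqrt hRS₂R) (by rw [msqrt_mul_msqrt hRS₂R.posSemidef, msqrt_mul_msqrt h₂.posSemidef])
  refine (approx_iff_of_unitary hO ?_ ?_).symm
  · rw [star_inv_mul_mul_of_isHermitian hR hB hT]
    calc T⁻¹ * (R * S₁ * R) * T⁻¹ = T⁻¹ * (R * ((B * B⁻¹) * S₁ * (B⁻¹ * B)) * R) * T⁻¹ := by
          rw [hBB, hBB', Matrix.one_mul, Matrix.mul_one]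
      _ = T⁻¹ * R * B * (B⁻¹ * S₁ * B⁻¹) * (B * R * T⁻¹) := by noncomm_ring
  · show T⁻¹ *ᵥ (R *ᵥ μ₁ + μ - (R *ᵥ μ₂ + μ)) = (T⁻¹ * R * B) *ᵥ (B⁻¹ *ᵥ (μ₁ - μ₂))
    rw [add_sub_add_right_eq_sub, ← mulVec_sub, mulVec_mulVec, mulVec_mulVec,
      Matrix.mul_assoc _ B, hBB, Matrix.mul_one]

/-- Lemma: the relation `≈_{γ,ρ,τ}` is invariant under the affine rescaling
`(ν, Λ) ↦ (Σ^{1/2} ν + μ, Σ^{1/2} Λ Σ^{1/2})`. -/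
theorem approx_invariant_under_scaling {d : ℕ} (μ : Fin d → ℝ)
    (S : Matrix (Fin d) (Fin d) ℝ) (hS : S.PosDef)
    (μ₁ μ₂ : Fin d → ℝ) (S₁ S₂ : Matrix (Fin d) (Fin d) ℝ)
    (h₁ : S₁.PosDef) (h₂ : S₂.PosDef)
    (γ ρ τ : ℝ) (hγ : 0 < γ) (hρ : 0 < ρ) (hτ : 0 < τ) :
    approx γ ρ τ (μ₁, S₁) (μ₂, S₂) ↔
      approx γ ρ τ (msqrt S *ᵥ μ₁ + μ, msqrt S * S₁ * msqrt S)
        (msqrt S *ᵥ μ₂ + μ, msqrt S * S₂ * msqrt S) :=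
  approx_invariant_under_scaling_general μ S hS μ₁ μ₂ S₁ S₂ h₂ γ ρ τ
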